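/- Let F be a reducing family of degree λ for a set B connected to 1, with Λ(γ(f)) = Λ(f) for all f ∈ F, and suppose the truncated multiplication operators commute: M_{j,λ} ∘ M_{i,λ⁻} = M_{i,λ} ∘ M_{j,λ⁻} for all 1 ≤ i, j ≤ n. Then π_F extends to a K-linear projection π^e_F : K[x]_λ → ⟨B⟩_λ whose kernel is F_⟨λ⟩, the span of the monomial multiples x^α f_i of elements of F of degree ≤ λ. Consequently K[x]_λ = ⟨B⟩_λ ⊕ F_⟨λ⟩. -/

import Mathlib

open MvPolynomial
open scoped Classical

abbrev Mon (n : ℕ) := Fin n →₀ ℕ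

def prolong {n : ℕ} (B : Set (Mon n)) : Set (Mon n) :=
  B ∪ ⋃ i : Fin n, (fun m => Finsupp.single i 1 + m) '' B

def border {n : ℕ} (B : Set (Mon n)) : Set (Mon n) := prolong B \ B

noncomputable def varsSum {n : ℕ} (L : List (Fin n)) : Mon n :=
  (L.map fun i => Finsupp.single i 1).sum

def ConnectedTo1 {n : ℕ} (B : Set (Mon n)) : Prop :=
  0 ∈ B ∧ ∀ m ∈ B, ∃ L : List (Fin n), varsSum L = m ∧
    ∀ L' : List (Fin n), L' <+: L → varsSum L' ∈ B

def degSum {n : ℕ} (m : Mon n) : ℕ := m.sum fun _ e => e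
noncomputable def spanMon {n : ℕ} (K : Type) [Field K] (B : Set (Mon n)) :
    Submodule K (MvPolynomial (Fin n) K) :=
  Submodule.span K ((fun m => (monomial m (1 : K) : MvPolynomial (Fin n) K)) '' B)

noncomputable def piF {n : ℕ} {K : Type} [Field K] (B H : Set (Mon n))
    (ρ : Mon n → MvPolynomial (Fin n) K) (p : MvPolynomial (Fin n) K) :
    MvPolynomial (Fin n) K :=
  p.support.sum fun m =>
    if m ∈ B then monomial m (p.coeff m)
    else if m ∈ H then p.coeff m • ρ m else 0

noncomputable def redList {n : ℕ} {K : Type} [Field K] (B H : Set (Mon n))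
    (ρ : Mon n → MvPolynomial (Fin n) K) : List (Fin n) → MvPolynomial (Fin n) K
  | [] => 1
  | i :: L => piF B H ρ (X i * redList B H ρ L)

def DefinedOn {n : ℕ} {K : Type} [Field K] (B H : Set (Mon n))
    (p : MvPolynomial (Fin n) K) : Prop :=
  ↑p.support ⊆ B ∪ H

def RedDefined {n : ℕ} {K : Type} [Field K] (B H : Set (Mon n))
    (ρ : Mon n → MvPolynomial (Fin n) K) : List (Fin n) → Prop
  | [] => True
  | i :: L => RedDefined B H ρ L ∧ DefinedOn B H (X i * redList B H ρ L)

def Eset {n : ℕ} {K : Type} [Field K] (B H : Set (Mon n))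
    (ρ : Mon n → MvPolynomial (Fin n) K) : Set (Mon n) :=
  { m | ∀ L : List (Fin n), varsSum L = m → RedDefined B H ρ L }

/-- The span F_⟨λ⟩ of the monomial multiples of the rewriting family of degree ≤ λ. -/
noncomputable def Fspan {n : ℕ} (K : Type) [Field K] {Λ : Type}
    [AddCommMonoid Λ] [LinearOrder Λ] [IsOrderedAddMonoid Λ] (deg : Mon n → Λ) (lam : Λ) (H : Set (Mon n))
    (ρ : Mon n → MvPolynomial (Fin n) K) : Submodule K (MvPolynomial (Fin n) K) :=
  Submodule.span K { q | ∃ α : Mon n, ∃ h ∈ H, deg (α + h) ≤ lam ∧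
    q = (monomial α (1 : K)) * (monomial h 1 - ρ h) }

/-!
The extension `π^e_F` sends a monomial `x^m` of degree `≤ λ` to `M_{i_1} ⋯ M_{i_k} 1`, where
`x^m = x_{i_1} ⋯ x_{i_k}` in some order. Swapping two adjacent factors is exactly the commutation
hypothesis, so this normal form does not depend on the order, and hence
`π^e_F (x^α r) = M_α r` for `r ∈ ⟨B⟩`. Walking along a path to `x^m` inside `B` shows that
`π^e_F` fixes `⟨B⟩_λ`; writing `h = x_j β` with `β ∈ B` shows that it kills every generator
`x^α (x^h - ρ h)` of `F_⟨λ⟩`. Telescoping `x^m - M_{i_1} ⋯ M_{i_k} 1` along the chain of products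
gives `p - π^e_F p ∈ F_⟨λ⟩`. Uniqueness of the decomposition follows by applying `π^e_F`.
-/

namespace MvPolynomial

section LinearExtension

variable {σ R M : Type*} [CommSemiring R] [AddCommMonoid M] [Module R M]

lemma restrictSupport_le {s : Set (σ →₀ ℕ)} {S : Submodule R (MvPolynomial σ R)}
    (h : ∀ m ∈ s, monomial m 1 ∈ S) : restrictSupport R s ≤ S := by
  rw [restrictSupport_eq_span, Submodule.span_le]
  rintro _ ⟨m, hm, rfl⟩
  exact h m hm

noncomputable def liftMon (G : (σ →₀ ℕ) → M) : MvPolynomial σ R →ₗ[R] M :=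
  (basisMonomials σ R).constr R G

@[simp]
lemma liftMon_monomial_one (G : (σ →₀ ℕ) → M) (m : σ →₀ ℕ) :
    liftMon G (monomial m (1 : R)) = G m :=
  (basisMonomials σ R).constr_basis R G m

lemma liftMon_apply (G : (σ →₀ ℕ) → M) (p : MvPolynomial σ R) :
    liftMon G p = ∑ m ∈ p.support, coeff m p • G m :=
  (basisMonomials σ R).constr_apply R G p

lemma liftMon_mem {G : (σ →₀ ℕ) → M} {S : Submodule R M} {p : MvPolynomial σ R}
    (h : ∀ m ∈ p.support, G m ∈ S) : liftMon G p ∈ S :=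
  restrictSupport_le (S := S.comap (liftMon G)) (fun m hm => by simpa using h m hm)
    (show ↑p.support ⊆ ↑p.support from subset_rfl)

end LinearExtension

lemma sub_liftMon_mem {σ R : Type*} [CommRing R] {G : (σ →₀ ℕ) → MvPolynomial σ R}
    {S : Submodule R (MvPolynomial σ R)} {p : MvPolynomial σ R}
    (h : ∀ m ∈ p.support, monomial m 1 - G m ∈ S) : p - liftMon G p ∈ S := by
  have hlift : liftMon (fun m => monomial m 1 - G m) = LinearMap.id - liftMon (R := R) G := by
    rw [liftMon, show (fun m => monomial m (1 : R) - G m) = (fun m => monomial m 1) - G from rfl,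
      map_sub]
    exact congrArg (· - _) ((basisMonomials σ R).constr_self R LinearMap.id)
  simpa [hlift] using liftMon_mem h

end MvPolynomial

section Monomials

variable {n : ℕ}

lemma varsSum_cons (i : Fin n) (L : List (Fin n)) :
    varsSum (i :: L) = Finsupp.single i 1 + varsSum L := by
  simp [varsSum]

lemma varsSum_append (L L' : List (Fin n)) : varsSum (L ++ L') = varsSum L + varsSum L' := by
  simp [varsSum]

lemma varsSum_apply (L : List (Fin n)) (j : Fin n) : varsSum L j = L.count j := by
  induction L with
  | nil => rfl
  | cons i L ih =>
    rw [varsSum_cons, Finsupp.add_apply, ih, Finsupp.single_apply, List.count_cons]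
    split_ifs <;> simp_all [add_comm]

lemma List.Perm.varsSum_eq {L L' : List (Fin n)} (h : L.Perm L') : varsSum L = varsSum L' :=
  (h.map _).sum_eq

lemma perm_of_varsSum_eq {L L' : List (Fin n)} (h : varsSum L = varsSum L') : L.Perm L' :=
  List.perm_iff_count.mpr fun j => by rw [← varsSum_apply, ← varsSum_apply, h]

noncomputable def varList (m : Mon n) : List (Fin n) := m.toMultiset.toList

@[simp]
lemma varsSum_varList (m : Mon n) : varsSum (varList m) = m := by
  ext j
  rw [varsSum_apply, varList, ← Multiset.coe_count, Multiset.coe_toList, Finsupp.count_toMultiset]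

lemma varList_single (i : Fin n) : varList (Finsupp.single i 1) = [i] := by
  simp [varList]

lemma deg_varsSum_cons {Λ : Type} [Add Λ] {deg : Mon n → Λ}
    (hdeg : ∀ a b : Mon n, deg (a + b) = deg a + deg b) (i : Fin n) (L : List (Fin n)) :
    deg (varsSum (i :: L)) = deg (Finsupp.single i 1) + deg (varsSum L) := by
  rw [varsSum_cons, hdeg]

lemma deg_varsSum_le_cons {Λ : Type} [Preorder Λ] {deg : Mon n → Λ} (hmono : Monotone deg)
    (i : Fin n) (L : List (Fin n)) : deg (varsSum L) ≤ deg (varsSum (i :: L)) :=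
  hmono (by rw [varsSum_cons]; exact le_add_self)

lemma single_add_mem_prolong {B : Set (Mon n)} {m : Mon n} (i : Fin n) (hm : m ∈ B) :
    Finsupp.single i 1 + m ∈ prolong B :=
  Or.inr (Set.mem_iUnion.mpr ⟨i, m, hm, rfl⟩)

lemma exists_single_add_of_mem_border {B : Set (Mon n)} {m : Mon n} (hm : m ∈ border B) :
    ∃ j β, β ∈ B ∧ Finsupp.single j 1 + β = m := by
  obtain ⟨hm | hm, hmB⟩ := hm
  · exact absurd hm hmB
  · obtain ⟨j, β, hβ, rfl⟩ := Set.mem_iUnion.mp hm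
    exact ⟨j, β, hβ, rfl⟩

end Monomials

section MultiplicationOperators

variable {n : ℕ} {K : Type} [Field K] {B H : Set (Mon n)} {ρ : Mon n → MvPolynomial (Fin n) K}

lemma spanMon_eq_restrictSupport (B : Set (Mon n)) : spanMon K B = restrictSupport K B :=
  (restrictSupport_eq_span K B).symm

variable (B H ρ) in
noncomputable def reduceMon (m : Mon n) : MvPolynomial (Fin n) K :=
  if m ∈ B then monomial m 1 else if m ∈ H then ρ m else 0

variable (B H ρ) in
lemma piF_eq_liftMon : piF B H ρ = liftMon (reduceMon B H ρ) := by
  ext1 p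
  rw [liftMon_apply, piF]
  refine Finset.sum_congr rfl fun m _ => ?_
  unfold reduceMon
  split_ifs <;> simp [smul_monomial]

-- `M_i` of the paper, before restricting it to `⟨B⟩_{λ⁻} → ⟨B⟩_λ`.
variable (B H ρ) in
noncomputable def multOp (i : Fin n) : Module.End K (MvPolynomial (Fin n) K) :=
  liftMon (reduceMon B H ρ) ∘ₗ LinearMap.mulLeft K (X i)

lemma multOp_apply (i : Fin n) (p : MvPolynomial (Fin n) K) :
    multOp B H ρ i p = piF B H ρ (X i * p) := by
  rw [piF_eq_liftMon]; rfl

lemma multOp_monomial_one (i : Fin n) (m : Mon n) :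
    multOp B H ρ i (monomial m 1) = reduceMon B H ρ (Finsupp.single i 1 + m) := by
  simp [multOp, X, monomial_mul]

variable (B H ρ) in
noncomputable def multOpList (L : List (Fin n)) : Module.End K (MvPolynomial (Fin n) K) :=
  (L.map (multOp B H ρ)).prod

lemma multOpList_cons (i : Fin n) (L : List (Fin n)) (p : MvPolynomial (Fin n) K) :
    multOpList B H ρ (i :: L) p = multOp B H ρ i (multOpList B H ρ L p) := by
  simp [multOpList, Module.End.mul_apply]

lemma multOpList_append (L L' : List (Fin n)) (p : MvPolynomial (Fin n) K) :
    multOpList B H ρ (L ++ L') p = multOpList B H ρ L (multOpList B H ρ L' p) := by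
  simp [multOpList, Module.End.mul_apply]

lemma multOpList_reverse_one {L : List (Fin n)}
    (hL : ∀ L' : List (Fin n), L' <+: L → varsSum L' ∈ B) :
    multOpList B H ρ L.reverse 1 = monomial (varsSum L) 1 := by
  induction L using List.reverseRecOn with
  | nil => exact one_def
  | append_singleton L i ih =>
    have hsum : varsSum (L ++ [i]) = Finsupp.single i 1 + varsSum L := by
      rw [varsSum_append, add_comm]; simp [varsSum]
    have hmem : Finsupp.single i 1 + varsSum L ∈ B := hsum ▸ hL _ List.prefix_rfl
    rw [List.reverse_append, List.reverse_singleton, List.singleton_append, multOpList_cons,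
      ih fun L' h => hL L' (h.trans (List.prefix_append L [i])), multOp_monomial_one, hsum]
    simp [reduceMon, hmem]

end MultiplicationOperators

section Truncation

variable {n : ℕ} {K : Type} [Field K] {Λ : Type} [Preorder Λ]

-- `⟨B⟩_d` of the paper.
variable (K) in
noncomputable def spanMonLE (deg : Mon n → Λ) (B : Set (Mon n)) (d : Λ) :
    Submodule K (MvPolynomial (Fin n) K) :=
  restrictSupport K {m | m ∈ B ∧ deg m ≤ d}

lemma mem_spanMonLE {deg : Mon n → Λ} {B : Set (Mon n)} {d : Λ} {p : MvPolynomial (Fin n) K} :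
    p ∈ spanMonLE K deg B d ↔ p ∈ spanMon K B ∧ ∀ m ∈ p.support, deg m ≤ d := by
  rw [spanMon_eq_restrictSupport, spanMonLE, mem_restrictSupport_iff, mem_restrictSupport_iff]
  exact ⟨fun h => ⟨fun m hm => (h hm).1, fun m hm => (h hm).2⟩,
    fun h m hm => ⟨h.1 hm, h.2 m hm⟩⟩

lemma spanMonLE_mono {deg : Mon n → Λ} {B : Set (Mon n)} {d d' : Λ} (h : d ≤ d') :
    spanMonLE K deg B d ≤ spanMonLE K deg B d' :=
  restrictSupport_mono K fun _ hm => ⟨hm.1, hm.2.trans h⟩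

lemma one_mem_spanMonLE {deg : Mon n → Λ} {B : Set (Mon n)} (h0 : 0 ∈ B) :
    (1 : MvPolynomial (Fin n) K) ∈ spanMonLE K deg B (deg 0) := by
  rw [one_def]
  exact (monomial_mem_restrictSupport K).mpr (Or.inl ⟨h0, le_rfl⟩)

structure IsReducingFamily (deg : Mon n → Λ) (lam : Λ) (B H : Set (Mon n))
    (ρ : Mon n → MvPolynomial (Fin n) K) : Prop where
  subset_border : H ⊆ border B
  support_subset : ∀ h ∈ H, ↑(ρ h).support ⊆ B
  mem_of_mem_border : ∀ m ∈ border B, deg m ≤ lam → m ∈ H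
  deg_le : ∀ h ∈ H, ∀ m ∈ (ρ h).support, deg m ≤ deg h

def CommutingMultOps (deg : Mon n → Λ) (lam : Λ) (B H : Set (Mon n))
    (ρ : Mon n → MvPolynomial (Fin n) K) : Prop :=
  ∀ m ∈ B, ∀ i j : Fin n, deg (Finsupp.single i 1 + (Finsupp.single j 1 + m)) ≤ lam →
    piF B H ρ (X i * piF B H ρ (X j * monomial m (1 : K))) =
      piF B H ρ (X j * piF B H ρ (X i * monomial m (1 : K)))

variable {deg : Mon n → Λ} {lam : Λ} {B H : Set (Mon n)} {ρ : Mon n → MvPolynomial (Fin n) K}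

lemma reduceMon_of_mem_H (hF : IsReducingFamily deg lam B H ρ) {h : Mon n} (hh : h ∈ H) :
    reduceMon B H ρ h = ρ h := by
  simp [reduceMon, (hF.subset_border hh).2, hh]

lemma rho_mem_spanMonLE (hF : IsReducingFamily deg lam B H ρ) {h : Mon n} (hh : h ∈ H) :
    ρ h ∈ spanMonLE K deg B (deg h) :=
  fun _ hγ => ⟨hF.support_subset h hh hγ, hF.deg_le h hh _ hγ⟩

lemma reduceMon_mem_spanMonLE (hF : IsReducingFamily deg lam B H ρ) {m : Mon n}
    (hm : m ∈ prolong B) (hml : deg m ≤ lam) :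
    reduceMon B H ρ m ∈ spanMonLE K deg B (deg m) := by
  by_cases hmB : m ∈ B
  · simp [reduceMon, hmB, spanMonLE]
  · have hmH : m ∈ H := hF.mem_of_mem_border m ⟨hm, hmB⟩ hml
    rw [reduceMon_of_mem_H hF hmH]
    exact rho_mem_spanMonLE hF hmH

lemma piF_mem_spanMon (hF : IsReducingFamily deg lam B H ρ) {p : MvPolynomial (Fin n) K}
    (hp : ∀ m ∈ p.support, deg m ≤ lam) (hpB : ↑p.support ⊆ prolong B) :
    piF B H ρ p ∈ spanMon K B := by
  rw [piF_eq_liftMon]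
  exact liftMon_mem fun m hm =>
    (mem_spanMonLE.mp (reduceMon_mem_spanMonLE hF (hpB hm) (hp m hm))).1

end Truncation

section ReducingFamily

variable {n : ℕ} {K : Type} [Field K] {Λ : Type} [AddCommMonoid Λ] [LinearOrder Λ]
  [IsOrderedAddMonoid Λ]
variable {deg : Mon n → Λ} {lam : Λ} {B H : Set (Mon n)} {ρ : Mon n → MvPolynomial (Fin n) K}

lemma monomial_mul_sub_reduceMon_mem_Fspan (hF : IsReducingFamily deg lam B H ρ)
    (hmono : Monotone deg) {c m : Mon n} (hm : m ∈ prolong B) (hd : deg (c + m) ≤ lam) :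
    monomial c 1 * (monomial m 1 - reduceMon B H ρ m) ∈ Fspan K deg lam H ρ := by
  by_cases hmB : m ∈ B
  · simp [reduceMon, hmB]
  · have hmH : m ∈ H := hF.mem_of_mem_border m ⟨hm, hmB⟩ ((hmono le_add_self).trans hd)
    rw [reduceMon_of_mem_H hF hmH]
    exact Submodule.subset_span ⟨c, m, hmH, hd, rfl⟩

lemma sub_piF_mem_Fspan (hF : IsReducingFamily deg lam B H ρ) (hmono : Monotone deg)
    {p : MvPolynomial (Fin n) K} (hp : ∀ m ∈ p.support, deg m ≤ lam)
    (hpB : ↑p.support ⊆ prolong B) : p - piF B H ρ p ∈ Fspan K deg lam H ρ := by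
  rw [piF_eq_liftMon]
  refine sub_liftMon_mem fun m hm => ?_
  simpa [← one_def] using
    monomial_mul_sub_reduceMon_mem_Fspan hF hmono (c := 0) (hpB hm) (by simpa using hp m hm)

lemma multOp_mem_spanMonLE (hF : IsReducingFamily deg lam B H ρ)
    (hdeg : ∀ a b : Mon n, deg (a + b) = deg a + deg b) {i : Fin n} {d : Λ}
    {q : MvPolynomial (Fin n) K} (hq : q ∈ spanMonLE K deg B d)
    (hd : deg (Finsupp.single i 1) + d ≤ lam) :
    multOp B H ρ i q ∈ spanMonLE K deg B (deg (Finsupp.single i 1) + d) := by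
  refine restrictSupport_le (S := (spanMonLE K deg B _).comap (multOp B H ρ i)) ?_ hq
  rintro m ⟨hmB, hmd⟩
  have hle : deg (Finsupp.single i 1 + m) ≤ deg (Finsupp.single i 1) + d := by
    rw [hdeg]; gcongr
  rw [Submodule.mem_comap, multOp_monomial_one]
  exact spanMonLE_mono hle
    (reduceMon_mem_spanMonLE hF (single_add_mem_prolong i hmB) (hle.trans hd))

-- Stated for the input `1` only: for a general `q ∈ ⟨B⟩_d` the bound `deg (varsSum L) + d`
-- fails at `L = []`, since `deg 0` need not be `0` when `Λ` is not cancellative.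
lemma multOpList_one_mem_spanMonLE (hF : IsReducingFamily deg lam B H ρ)
    (hdeg : ∀ a b : Mon n, deg (a + b) = deg a + deg b) (hmono : Monotone deg) (h0 : 0 ∈ B) :
    ∀ {L : List (Fin n)}, deg (varsSum L) ≤ lam →
      multOpList B H ρ L 1 ∈ spanMonLE K deg B (deg (varsSum L))
  | [], _ => one_mem_spanMonLE h0
  | i :: L, hd => by
    have hL := multOpList_one_mem_spanMonLE hF hdeg hmono h0
      ((deg_varsSum_le_cons hmono i L).trans hd)
    rw [deg_varsSum_cons hdeg] at hd ⊢
    rw [multOpList_cons]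
    exact multOp_mem_spanMonLE hF hdeg hL hd

lemma multOp_comm (hcomm : CommutingMultOps deg lam B H ρ)
    (hdeg : ∀ a b : Mon n, deg (a + b) = deg a + deg b) {i j : Fin n} {d : Λ}
    {q : MvPolynomial (Fin n) K} (hq : q ∈ spanMonLE K deg B d)
    (hd : deg (Finsupp.single i 1) + (deg (Finsupp.single j 1) + d) ≤ lam) :
    multOp B H ρ i (multOp B H ρ j q) = multOp B H ρ j (multOp B H ρ i q) := by
  refine restrictSupport_le (S := LinearMap.eqLocus (multOp B H ρ i ∘ₗ multOp B H ρ j)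
    (multOp B H ρ j ∘ₗ multOp B H ρ i)) ?_ hq
  rintro m ⟨hmB, hmd⟩
  simp only [LinearMap.mem_eqLocus, LinearMap.comp_apply, multOp_apply]
  refine hcomm m hmB i j (le_trans ?_ hd)
  rw [hdeg, hdeg]
  gcongr

lemma multOpList_one_perm (hF : IsReducingFamily deg lam B H ρ)
    (hcomm : CommutingMultOps deg lam B H ρ) (hdeg : ∀ a b : Mon n, deg (a + b) = deg a + deg b)
    (hmono : Monotone deg) (h0 : 0 ∈ B) {L L' : List (Fin n)} (hLL' : L.Perm L')
    (hd : deg (varsSum L) ≤ lam) : multOpList B H ρ L 1 = multOpList B H ρ L' 1 := by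
  induction hLL' with
  | nil => rfl
  | cons i _ ih =>
    rw [multOpList_cons, multOpList_cons, ih ((deg_varsSum_le_cons hmono i _).trans hd)]
  | swap i j L =>
    have hL := multOpList_one_mem_spanMonLE hF hdeg hmono h0
      (((deg_varsSum_le_cons hmono i L).trans (deg_varsSum_le_cons hmono j _)).trans hd)
    rw [deg_varsSum_cons hdeg, deg_varsSum_cons hdeg] at hd
    simp only [multOpList_cons]
    exact multOp_comm hcomm hdeg hL hd
  | trans h₁ _ ih₁ ih₂ => rw [ih₁ hd, ih₂ (h₁.varsSum_eq ▸ hd)]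

lemma monomial_mul_sub_multOp_mem_Fspan (hF : IsReducingFamily deg lam B H ρ)
    (hdeg : ∀ a b : Mon n, deg (a + b) = deg a + deg b) (hmono : Monotone deg) {i : Fin n}
    {c : Mon n} {d : Λ} {q : MvPolynomial (Fin n) K} (hq : q ∈ spanMonLE K deg B d)
    (hd : deg c + (deg (Finsupp.single i 1) + d) ≤ lam) :
    monomial c 1 * (X i * q - multOp B H ρ i q) ∈ Fspan K deg lam H ρ := by
  let f := LinearMap.mulLeft K (monomial c 1) ∘ₗ (LinearMap.mulLeft K (X i) - multOp B H ρ i)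
  suffices f q ∈ Fspan K deg lam H ρ from this
  refine restrictSupport_le (S := (Fspan K deg lam H ρ).comap f) ?_ hq
  rintro m ⟨hmB, hmd⟩
  have hf : f (monomial m 1) = monomial c 1 *
      (monomial (Finsupp.single i 1 + m) 1 - reduceMon B H ρ (Finsupp.single i 1 + m)) := by
    simp [f, multOp_monomial_one, X, monomial_mul]
  rw [Submodule.mem_comap, hf]
  refine monomial_mul_sub_reduceMon_mem_Fspan hF hmono (single_add_mem_prolong i hmB)
    (le_trans ?_ hd)
  rw [hdeg, hdeg]
  gcongr

lemma monomial_mul_sub_multOpList_one_mem_Fspan (hF : IsReducingFamily deg lam B H ρ)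
    (hdeg : ∀ a b : Mon n, deg (a + b) = deg a + deg b) (hmono : Monotone deg) (h0 : 0 ∈ B) :
    ∀ {L : List (Fin n)} {c : Mon n}, deg (c + varsSum L) ≤ lam →
      monomial c 1 * (monomial (varsSum L) 1 - multOpList B H ρ L 1) ∈ Fspan K deg lam H ρ
  | [], _, _ => by simp [multOpList, varsSum, ← one_def]
  | i :: L, c, hd => by
    have hsplit : monomial c (1 : K) *
          (monomial (varsSum (i :: L)) 1 - multOpList B H ρ (i :: L) 1) =
        monomial (c + Finsupp.single i 1) 1 *
            (monomial (varsSum L) 1 - multOpList B H ρ L 1) +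
          monomial c 1 *
            (X i * multOpList B H ρ L 1 - multOp B H ρ i (multOpList B H ρ L 1)) := by
      rw [multOpList_cons, varsSum_cons, monomial_single_add, monomial_add_single, pow_one]
      ring
    rw [varsSum_cons, ← add_assoc] at hd
    rw [hsplit]
    refine add_mem (monomial_mul_sub_multOpList_one_mem_Fspan hF hdeg hmono h0 hd)
      (monomial_mul_sub_multOp_mem_Fspan hF hdeg hmono
        (multOpList_one_mem_spanMonLE hF hdeg hmono h0 ((hmono le_add_self).trans hd)) ?_)
    rwa [← hdeg, ← hdeg, ← add_assoc]

variable (B H ρ) in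
noncomputable def normalForm (m : Mon n) : MvPolynomial (Fin n) K :=
  multOpList B H ρ (varList m) 1

lemma normalForm_mem_spanMonLE (hF : IsReducingFamily deg lam B H ρ)
    (hdeg : ∀ a b : Mon n, deg (a + b) = deg a + deg b) (hmono : Monotone deg) (h0 : 0 ∈ B)
    {m : Mon n} (hm : deg m ≤ lam) : normalForm B H ρ m ∈ spanMonLE K deg B (deg m) := by
  simpa [normalForm] using
    multOpList_one_mem_spanMonLE hF hdeg hmono h0 (L := varList m) (by simpa using hm)

lemma monomial_sub_normalForm_mem_Fspan (hF : IsReducingFamily deg lam B H ρ)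
    (hdeg : ∀ a b : Mon n, deg (a + b) = deg a + deg b) (hmono : Monotone deg) (h0 : 0 ∈ B)
    {m : Mon n} (hm : deg m ≤ lam) :
    monomial m 1 - normalForm B H ρ m ∈ Fspan K deg lam H ρ := by
  simpa [normalForm, ← one_def] using monomial_mul_sub_multOpList_one_mem_Fspan hF hdeg hmono h0
    (L := varList m) (c := 0) (by simpa using hm)

lemma normalForm_eq_multOpList (hF : IsReducingFamily deg lam B H ρ)
    (hcomm : CommutingMultOps deg lam B H ρ) (hdeg : ∀ a b : Mon n, deg (a + b) = deg a + deg b)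
    (hmono : Monotone deg) (h0 : 0 ∈ B) {L : List (Fin n)} {m : Mon n} (hL : varsSum L = m)
    (hm : deg m ≤ lam) : normalForm B H ρ m = multOpList B H ρ L 1 :=
  multOpList_one_perm hF hcomm hdeg hmono h0 (perm_of_varsSum_eq (by rw [varsSum_varList, hL]))
    (by rwa [varsSum_varList])

lemma normalForm_add (hF : IsReducingFamily deg lam B H ρ)
    (hcomm : CommutingMultOps deg lam B H ρ) (hdeg : ∀ a b : Mon n, deg (a + b) = deg a + deg b)
    (hmono : Monotone deg) (h0 : 0 ∈ B) {α γ : Mon n} (hd : deg (α + γ) ≤ lam) :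
    normalForm B H ρ (α + γ) = multOpList B H ρ (varList α) (normalForm B H ρ γ) := by
  rw [normalForm_eq_multOpList hF hcomm hdeg hmono h0 (L := varList α ++ varList γ)
    (by simp [varsSum_append]) hd, multOpList_append, normalForm]

lemma normalForm_of_mem (hF : IsReducingFamily deg lam B H ρ)
    (hcomm : CommutingMultOps deg lam B H ρ) (hdeg : ∀ a b : Mon n, deg (a + b) = deg a + deg b)
    (hmono : Monotone deg) (hB : ConnectedTo1 B) {m : Mon n} (hm : m ∈ B) (hml : deg m ≤ lam) :
    normalForm B H ρ m = monomial m 1 := by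
  obtain ⟨L, rfl, hL⟩ := hB.2 m hm
  rw [normalForm_eq_multOpList hF hcomm hdeg hmono hB.1 (L := L.reverse)
    (List.reverse_perm L).varsSum_eq hml, multOpList_reverse_one hL]

lemma normalForm_of_mem_H (hF : IsReducingFamily deg lam B H ρ)
    (hcomm : CommutingMultOps deg lam B H ρ) (hdeg : ∀ a b : Mon n, deg (a + b) = deg a + deg b)
    (hmono : Monotone deg) (hB : ConnectedTo1 B) {h : Mon n} (hh : h ∈ H) (hhl : deg h ≤ lam) :
    normalForm B H ρ h = ρ h := by
  obtain ⟨j, β, hβ, rfl⟩ := exists_single_add_of_mem_border (hF.subset_border hh)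
  rw [normalForm_add hF hcomm hdeg hmono hB.1 hhl,
    normalForm_of_mem hF hcomm hdeg hmono hB hβ ((hmono le_add_self).trans hhl), varList_single,
    multOpList_cons, multOpList, List.map_nil, List.prod_nil, Module.End.one_apply,
    multOp_monomial_one, reduceMon_of_mem_H hF hh]

variable (B H ρ) in
noncomputable def piFExt : MvPolynomial (Fin n) K →ₗ[K] MvPolynomial (Fin n) K :=
  liftMon (normalForm B H ρ)

lemma piFExt_mem_spanMonLE (hF : IsReducingFamily deg lam B H ρ)
    (hdeg : ∀ a b : Mon n, deg (a + b) = deg a + deg b) (hmono : Monotone deg) (h0 : 0 ∈ B)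
    {p : MvPolynomial (Fin n) K} (hp : ∀ m ∈ p.support, deg m ≤ lam) :
    piFExt B H ρ p ∈ spanMonLE K deg B lam :=
  liftMon_mem fun m hm =>
    spanMonLE_mono (hp m hm) (normalForm_mem_spanMonLE hF hdeg hmono h0 (hp m hm))

lemma sub_piFExt_mem_Fspan (hF : IsReducingFamily deg lam B H ρ)
    (hdeg : ∀ a b : Mon n, deg (a + b) = deg a + deg b) (hmono : Monotone deg) (h0 : 0 ∈ B)
    {p : MvPolynomial (Fin n) K} (hp : ∀ m ∈ p.support, deg m ≤ lam) :
    p - piFExt B H ρ p ∈ Fspan K deg lam H ρ :=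
  sub_liftMon_mem fun m hm => monomial_sub_normalForm_mem_Fspan hF hdeg hmono h0 (hp m hm)

lemma piFExt_eq_self (hF : IsReducingFamily deg lam B H ρ)
    (hcomm : CommutingMultOps deg lam B H ρ) (hdeg : ∀ a b : Mon n, deg (a + b) = deg a + deg b)
    (hmono : Monotone deg) (hB : ConnectedTo1 B) {b : MvPolynomial (Fin n) K}
    (hb : b ∈ spanMonLE K deg B lam) : piFExt B H ρ b = b :=
  restrictSupport_le (S := LinearMap.eqLocus (piFExt B H ρ) LinearMap.id)
    (fun m hm => by
      simpa [piFExt] using normalForm_of_mem hF hcomm hdeg hmono hB hm.1 hm.2) hb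

lemma piFExt_monomial_mul (hF : IsReducingFamily deg lam B H ρ)
    (hcomm : CommutingMultOps deg lam B H ρ) (hdeg : ∀ a b : Mon n, deg (a + b) = deg a + deg b)
    (hmono : Monotone deg) (hB : ConnectedTo1 B) {α : Mon n} {d : Λ}
    {r : MvPolynomial (Fin n) K} (hr : r ∈ spanMonLE K deg B d) (hd : deg α + d ≤ lam) :
    piFExt B H ρ (monomial α 1 * r) = multOpList B H ρ (varList α) r := by
  refine restrictSupport_le (S := LinearMap.eqLocus (piFExt B H ρ ∘ₗ LinearMap.mulLeft K
    (monomial α 1)) (multOpList B H ρ (varList α))) ?_ hr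
  rintro γ ⟨hγB, hγd⟩
  have hαγ : deg (α + γ) ≤ lam := by rw [hdeg]; exact le_trans (by gcongr) hd
  simp only [LinearMap.mem_eqLocus, LinearMap.comp_apply, LinearMap.mulLeft_apply, monomial_mul,
    one_mul, piFExt, liftMon_monomial_one]
  rw [normalForm_add hF hcomm hdeg hmono hB.1 hαγ,
    normalForm_of_mem hF hcomm hdeg hmono hB hγB ((hmono le_add_self).trans hαγ)]

lemma piFExt_eq_zero_of_mem_Fspan (hF : IsReducingFamily deg lam B H ρ)
    (hcomm : CommutingMultOps deg lam B H ρ) (hdeg : ∀ a b : Mon n, deg (a + b) = deg a + deg b)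
    (hmono : Monotone deg) (hB : ConnectedTo1 B) {q : MvPolynomial (Fin n) K}
    (hq : q ∈ Fspan K deg lam H ρ) : piFExt B H ρ q = 0 := by
  refine (Submodule.span_le (p := LinearMap.ker (piFExt B H ρ))).mpr ?_ hq
  rintro _ ⟨α, h, hh, hd, rfl⟩
  rw [SetLike.mem_coe, LinearMap.mem_ker, mul_sub, map_sub,
    piFExt_monomial_mul hF hcomm hdeg hmono hB (rho_mem_spanMonLE hF hh) (by rwa [← hdeg]),
    monomial_mul, one_mul, piFExt, liftMon_monomial_one,
    normalForm_add hF hcomm hdeg hmono hB.1 hd,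
    normalForm_of_mem_H hF hcomm hdeg hmono hB hh ((hmono le_add_self).trans hd), sub_self]

end ReducingFamily

/-- if the truncated multiplication operators commute, π_F extends to a
    projection of K[x]_λ onto ⟨B⟩_λ with kernel F_⟨λ⟩; in particular
    K[x]_λ = ⟨B⟩_λ ⊕ F_⟨λ⟩ (unique decomposition). -/
theorem stmt8 {n : ℕ} {K : Type} [Field K] {Λ : Type} [AddCommMonoid Λ] [LinearOrder Λ] [IsOrderedAddMonoid Λ]
    (deg : Mon n → Λ)
    (hdeg : ∀ a b : Mon n, deg (a + b) = deg a + deg b)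
    (hredgrad : ∀ a b : Mon n, a ≤ b → a ≠ b → deg a < deg b)
    (B H : Set (Mon n)) (ρ : Mon n → MvPolynomial (Fin n) K) (lam : Λ)
    (hB : ConnectedTo1 B) (hH : H ⊆ border B)
    (hρ : ∀ h ∈ H, ↑(ρ h).support ⊆ B)
    (hredfam : ∀ m ∈ border B, deg m ≤ lam → m ∈ H)
    (hlead : ∀ h ∈ H, ∀ m ∈ (ρ h).support, deg m ≤ deg h)
    (hcomm : ∀ m ∈ B, ∀ i j : Fin n,
      deg (Finsupp.single i 1 + (Finsupp.single j 1 + m)) ≤ lam →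
      piF B H ρ (X i * piF B H ρ (X j * monomial m (1 : K))) =
      piF B H ρ (X j * piF B H ρ (X i * monomial m (1 : K)))) :
    (∀ p : MvPolynomial (Fin n) K, (∀ m ∈ p.support, deg m ≤ lam) →
      ↑p.support ⊆ prolong B →
      piF B H ρ p ∈ spanMon K B ∧ p - piF B H ρ p ∈ Fspan K deg lam H ρ) ∧
    (∀ p : MvPolynomial (Fin n) K, (∀ m ∈ p.support, deg m ≤ lam) →
      ∃! bq : MvPolynomial (Fin n) K × MvPolynomial (Fin n) K,
        bq.1 ∈ spanMon K B ∧ (∀ m ∈ bq.1.support, deg m ≤ lam) ∧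
        bq.2 ∈ Fspan K deg lam H ρ ∧ p = bq.1 + bq.2) := by
  have hmono : Monotone deg :=
    StrictMono.monotone fun a b hab => hredgrad a b hab.le hab.ne
  have hF : IsReducingFamily deg lam B H ρ := ⟨hH, hρ, hredfam, hlead⟩
  refine ⟨fun p hp hpB => ⟨piF_mem_spanMon hF hp hpB, sub_piF_mem_Fspan hF hmono hp hpB⟩,
    fun p hp => ⟨(piFExt B H ρ p, p - piFExt B H ρ p), ?_, ?_⟩⟩
  · obtain ⟨hb, hbd⟩ := mem_spanMonLE.mp (piFExt_mem_spanMonLE hF hdeg hmono hB.1 hp)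
    exact ⟨hb, hbd, sub_piFExt_mem_Fspan hF hdeg hmono hB.1 hp, (add_sub_cancel _ _).symm⟩
  · rintro ⟨b, q⟩ ⟨hb, hbd, hq, rfl⟩
    have hproj : piFExt B H ρ (b + q) = b := by
      rw [map_add, piFExt_eq_self hF hcomm hdeg hmono hB (mem_spanMonLE.mpr ⟨hb, hbd⟩),
        piFExt_eq_zero_of_mem_Fspan hF hcomm hdeg hmono hB hq, add_zero]
    simp [hproj]
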